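/- Let n ≥ 1 and let f ∈ 𝔚_n, i.e. f : ℝ → ℂ is n times continuously differentiable, for every k = 0,…,n there exists an integrable w_k : ℝ → ℂ with f^{(k)}(x)·(x−i)^k = ∫_ℝ w_k(t)·e^{ixt} dt for all x ∈ ℝ, and x ↦ f^{(k)}(x)·(1+|x|)^{k−1} is integrable for k = 1,…,n. Then for every k = 1,…,n the derivative f^{(k)} is integrable on ℝ and there exists an integrable v_k : ℝ → ℂ with f^{(k)}(x) = ∫_ℝ v_k(t)·e^{ixt} dt for all x ∈ ℝ (i.e. the Fourier transform of f^{(k)} is integrable). -/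

import Mathlib

/-!
For `Im a > 0` one has `∫_{t ≤ 0} i e^{-iat} e^{ixt} dt = (x - a)⁻¹`, so dividing the Fourier
integral of an `L¹` function by `x - a` is the same as convolving that function with the `L¹`
kernel `t ↦ i e^{-iat} 1_{t ≤ 0}`, and the result is again `L¹`. Dividing `k` times by `x - i`
removes the weight `(x - i)ᵏ` in front of `f⁽ᵏ⁾`. Integrability of `f⁽ᵏ⁾` is immediate from
`(1 + |x|)ᵏ⁻¹ ≥ 1`.
-/

open MeasureTheory Set Complex
open scoped Convolution

/-- `h` is the Fourier integral `x ↦ ∫ w(t) e^{ixt} dt` of an integrable `w`, i.e. `ĥ ∈ L¹`. -/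
def HasIntegrableFourier (h : ℝ → ℂ) : Prop :=
  ∃ w : ℝ → ℂ, Integrable w ∧ ∀ x : ℝ, h x = ∫ t : ℝ, w t * cexp (I * x * t)

lemma cexp_I_mul_eq_mul_cexp_I_mul_sub (x s t : ℝ) :
    cexp (I * x * t) = cexp (I * x * s) * cexp (I * x * ↑(t - s)) := by
  rw [← Complex.exp_add]
  push_cast
  ring_nf

lemma norm_cexp_I_mul (x t : ℝ) : ‖cexp (I * x * t)‖ = 1 := by
  rw [mul_assoc, ← ofReal_mul, norm_exp_I_mul_ofReal]

lemma MeasureTheory.Integrable.mul_cexp_I_mul {w : ℝ → ℂ} (hw : Integrable w) (x : ℝ) :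
    Integrable fun t : ℝ => w t * cexp (I * x * t) :=
  hw.mul_bdd (by fun_prop) (.of_forall fun t => (norm_cexp_I_mul x t).le)

lemma convolution_mul_cexp (w K : ℝ → ℂ) (x t : ℝ) :
    (w ⋆[ContinuousLinearMap.mul ℂ ℂ] K) t * cexp (I * x * t) =
      ((fun s => w s * cexp (I * x * s)) ⋆[ContinuousLinearMap.mul ℂ ℂ]
        fun s => K s * cexp (I * x * s)) t := by
  simp only [convolution_def, ContinuousLinearMap.mul_apply', ← integral_mul_const]
  congr 1 with s
  rw [cexp_I_mul_eq_mul_cexp_I_mul_sub x s t]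
  ring

theorem integral_convolution_mul_cexp {w K : ℝ → ℂ} (hw : Integrable w) (hK : Integrable K)
    (x : ℝ) :
    ∫ t : ℝ, (w ⋆[ContinuousLinearMap.mul ℂ ℂ] K) t * cexp (I * x * t) =
      (∫ t : ℝ, w t * cexp (I * x * t)) * ∫ t : ℝ, K t * cexp (I * x * t) := by
  simp only [convolution_mul_cexp]
  exact integral_convolution _ (hw.mul_cexp_I_mul x) (hK.mul_cexp_I_mul x)

noncomputable def resolventKernel (a : ℂ) : ℝ → ℂ :=
  (Iic 0).indicator fun t => I * cexp (-(I * a) * t)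

lemma integrable_resolventKernel {a : ℂ} (ha : 0 < a.im) : Integrable (resolventKernel a) := by
  refine (integrable_indicator_iff measurableSet_Iic).2 (.const_mul ?_ I)
  exact integrableOn_exp_mul_complex_Iic (by simpa using ha) 0

lemma ofReal_sub_ne_zero {a : ℂ} (ha : a.im ≠ 0) (x : ℝ) : (x : ℂ) - a ≠ 0 :=
  fun h => by simpa [ha] using congrArg im h

theorem integral_resolventKernel_mul_cexp {a : ℂ} (ha : 0 < a.im) (x : ℝ) :
    ∫ t : ℝ, resolventKernel a t * cexp (I * x * t) = ((x : ℂ) - a)⁻¹ := by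
  have hxa := ofReal_sub_ne_zero ha.ne' x
  have hre : 0 < (I * ((x : ℂ) - a)).re := by simpa using ha
  calc ∫ t : ℝ, resolventKernel a t * cexp (I * x * t)
      = ∫ t : ℝ in Iic 0, I * cexp (I * ((x : ℂ) - a) * t) := by
        rw [← integral_indicator measurableSet_Iic]
        congr 1 with t
        by_cases ht : t ∈ Iic (0 : ℝ)
        · simp only [resolventKernel, indicator_of_mem ht, mul_assoc, ← Complex.exp_add]
          ring_nf
        · simp [resolventKernel, indicator_of_notMem ht]
    _ = I * (1 / (I * ((x : ℂ) - a))) := by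
        rw [integral_const_mul, integral_exp_mul_complex_Iic hre]
        simp
    _ = ((x : ℂ) - a)⁻¹ := by field_simp

namespace HasIntegrableFourier

theorem of_mul_sub {h : ℝ → ℂ} {a : ℂ} (ha : 0 < a.im)
    (H : HasIntegrableFourier fun x => h x * ((x : ℂ) - a)) : HasIntegrableFourier h := by
  obtain ⟨w, hw, hwh⟩ := H
  have hK := integrable_resolventKernel ha
  refine ⟨w ⋆[ContinuousLinearMap.mul ℂ ℂ] resolventKernel a,
    hw.integrable_convolution _ hK, fun x => ?_⟩
  rw [integral_convolution_mul_cexp hw hK, ← hwh, integral_resolventKernel_mul_cexp ha,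
    mul_inv_cancel_right₀ (ofReal_sub_ne_zero ha.ne' x)]

theorem of_mul_sub_pow {h : ℝ → ℂ} {a : ℂ} (ha : 0 < a.im) (m : ℕ)
    (H : HasIntegrableFourier fun x => h x * ((x : ℂ) - a) ^ m) : HasIntegrableFourier h := by
  induction m with
  | zero => simpa using H
  | succ m ih => exact ih (of_mul_sub ha (by simpa only [pow_succ, mul_assoc] using H))

end HasIntegrableFourier

lemma integrable_of_integrable_mul_one_add_abs_pow {g : ℝ → ℂ} (hg : AEStronglyMeasurable g)
    (m : ℕ) (H : Integrable fun x : ℝ => g x * ((1 + |x| : ℝ) : ℂ) ^ m) : Integrable g := by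
  refine H.norm.mono' hg (.of_forall fun x => ?_)
  rw [norm_mul, norm_pow, norm_real, Real.norm_of_nonneg (by positivity)]
  exact le_mul_of_one_le_right (norm_nonneg _) (one_le_pow₀ (by simp))

theorem stmt4 (n : ℕ) (f : ℝ → ℂ) (hf : ContDiff ℝ n f)
    (hW1 : ∀ k ≤ n, ∃ w : ℝ → ℂ, Integrable w ∧ ∀ x : ℝ,
      iteratedDeriv k f x * ((x : ℂ) - Complex.I) ^ k =
        ∫ t : ℝ, w t * Complex.exp (Complex.I * x * t))
    (hW2 : ∀ k, 1 ≤ k → k ≤ n →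
      Integrable fun x : ℝ => iteratedDeriv k f x * ((1 + |x| : ℝ) : ℂ) ^ (k - 1)) :
    ∀ k, 1 ≤ k → k ≤ n →
      (Integrable fun x : ℝ => iteratedDeriv k f x) ∧
      ∃ v : ℝ → ℂ, Integrable v ∧ ∀ x : ℝ,
        iteratedDeriv k f x = ∫ t : ℝ, v t * Complex.exp (Complex.I * x * t) := by
  intro k hk1 hkn
  have hmeas : AEStronglyMeasurable (iteratedDeriv k f) :=
    (hf.continuous_iteratedDeriv k (mod_cast hkn)).aestronglyMeasurable
  exact ⟨integrable_of_integrable_mul_one_add_abs_pow hmeas _ (hW2 k hk1 hkn),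
    HasIntegrableFourier.of_mul_sub_pow (by simp) k (hW1 k hkn)⟩
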